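/- State profile in terms of truncated spans: let S₁,…,S_{n−k} be a basis of a subspace S ≤ V = (𝔽₂²)ⁿ (so dim S = n − k) and 0 ≤ i ≤ n. Then log₂|fᵢ(S^⊥)| = dim πᵢ(S) + dim (id − πᵢ)(S) − (n − k), where πᵢ(S) and (id − πᵢ)(S) are the images of S under the truncations πᵢ and id − πᵢ, and dimensions are over 𝔽₂. -/

import Mathlib

/-- `V = (𝔽₂²)ⁿ`, the additive group underlying the effective Pauli group `Gₙ`. -/
abbrev PV (n : ℕ) := Fin n → ZMod 2 × ZMod 2

/-- The symplectic form `ω(v,w) = Σᵢ (aᵢb′ᵢ + a′ᵢbᵢ)` over `𝔽₂`. -/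
def sympOmega {n : ℕ} (v w : PV n) : ZMod 2 :=
  ∑ i, ((v i).1 * (w i).2 + (w i).1 * (v i).2)

lemma sympOmega_add_left {n : ℕ} (a b w : PV n) :
    sympOmega (a + b) w = sympOmega a w + sympOmega b w := by
  unfold sympOmega
  rw [← Finset.sum_add_distrib]
  refine Finset.sum_congr rfl fun i _ => ?_
  simp [Prod.fst_add, Prod.snd_add, add_mul, mul_add]
  ring

lemma sympOmega_smul_left {n : ℕ} (c : ZMod 2) (a w : PV n) :
    sympOmega (c • a) w = c * sympOmega a w := by
  unfold sympOmega
  rw [Finset.mul_sum]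
  refine Finset.sum_congr rfl fun i _ => ?_
  simp [Prod.smul_fst, Prod.smul_snd, smul_eq_mul]
  ring

/-- The symplectic orthogonal `S^⊥ = {P ∈ V : ω(P,Q) = 0 for all Q ∈ S}`. -/
def sPerp {n : ℕ} (S : Submodule (ZMod 2) (PV n)) : Submodule (ZMod 2) (PV n) where
  carrier := {P | ∀ Q ∈ S, sympOmega P Q = 0}
  add_mem' := by
    intro a b ha hb Q hQ
    rw [sympOmega_add_left, ha Q hQ, hb Q hQ, add_zero]
  zero_mem' := by
    intro Q hQ
    simp [sympOmega]
  smul_mem' := by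
    intro c a ha Q hQ
    rw [sympOmega_smul_left, ha Q hQ, mul_zero]

/-- The truncation map `πᵢ : V → V`, `(P₁,…,Pₙ) ↦ (P₁,…,Pᵢ,0,…,0)`. -/
def trunc (n i : ℕ) : PV n →ₗ[ZMod 2] PV n where
  toFun v := fun j => if (j : ℕ) < i then v j else 0
  map_add' := by
    intro a b
    funext j
    by_cases h : (j : ℕ) < i <;> simp [h]
  map_smul' := by
    intro c a
    funext j
    by_cases h : (j : ℕ) < i <;> simp [h]

/-! ### Auxiliary lemmas -/

lemma sympOmega_comm {n : ℕ} (v w : PV n) : sympOmega v w = sympOmega w v := by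
  unfold sympOmega
  exact Finset.sum_congr rfl fun i _ => by ring

/-- The symplectic form as a bilinear form. -/
def sB (n : ℕ) : LinearMap.BilinForm (ZMod 2) (PV n) :=
  LinearMap.mk₂ (ZMod 2) sympOmega sympOmega_add_left
    (fun c a b => by rw [sympOmega_smul_left, smul_eq_mul])
    (fun a b c => by
      rw [sympOmega_comm, sympOmega_add_left, sympOmega_comm b a, sympOmega_comm c a])
    (fun c a b => by
      rw [sympOmega_comm, sympOmega_smul_left, sympOmega_comm b a, smul_eq_mul])

@[simp] lemma sB_apply {n : ℕ} (v w : PV n) : sB n v w = sympOmega v w := rfl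

lemma sB_refl {n : ℕ} : (sB n).IsRefl := by
  intro v w h
  rw [sB_apply, sympOmega_comm]
  exact h

lemma sympOmega_single {n : ℕ} (v : PV n) (j : Fin n) (p : ZMod 2 × ZMod 2) :
    sympOmega v (Pi.single j p) = (v j).1 * p.2 + p.1 * (v j).2 := by
  unfold sympOmega
  rw [Finset.sum_eq_single j]
  · rw [Pi.single_eq_same]
  · intro b _ hb
    rw [Pi.single_eq_of_ne hb]
    simp
  · simp

lemma sB_nondeg {n : ℕ} : (sB n).Nondegenerate := by
  refine (LinearMap.IsRefl.nondegenerate_iff_separatingLeft sB_refl).2 ?_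
  intro v h
  funext j
  have h1 := h (Pi.single j (0, 1))
  have h2 := h (Pi.single j (1, 0))
  rw [sB_apply, sympOmega_single] at h1 h2
  simp only [mul_one, zero_mul, add_zero, one_mul, mul_zero, zero_add] at h1 h2
  show v j = (0, 0)
  exact Prod.ext h1 h2

lemma mem_sPerp {n : ℕ} {S : Submodule (ZMod 2) (PV n)} {P : PV n} :
    P ∈ sPerp S ↔ ∀ Q ∈ S, sympOmega P Q = 0 := Iff.rfl

lemma sPerp_eq_orthogonal {n : ℕ} (S : Submodule (ZMod 2) (PV n)) :
    sPerp S = (sB n).orthogonal S := by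
  ext P
  rw [mem_sPerp, LinearMap.BilinForm.mem_orthogonal_iff]
  constructor
  · intro h Q hQ
    show sB n Q P = 0
    rw [sB_apply, sympOmega_comm]
    exact h Q hQ
  · intro h Q hQ
    rw [sympOmega_comm]
    exact h Q hQ

lemma trunc_apply {n : ℕ} (i : ℕ) (v : PV n) (j : Fin n) :
    trunc n i v j = if (j : ℕ) < i then v j else 0 := rfl

lemma sympOmega_trunc {n : ℕ} (i : ℕ) (v w : PV n) :
    sympOmega (trunc n i v) w = sympOmega v (trunc n i w) := by
  unfold sympOmega
  refine Finset.sum_congr rfl fun j _ => ?_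
  rw [trunc_apply, trunc_apply]
  by_cases h : (j : ℕ) < i <;> simp [h]

lemma ker_pi_sPerp {n m : ℕ} (v : Fin m → PV n) :
    LinearMap.ker (LinearMap.pi fun j => sB n (v j)) =
      sPerp (Submodule.span (ZMod 2) (Set.range v)) := by
  ext P
  rw [LinearMap.mem_ker, mem_sPerp]
  constructor
  · intro h Q hQ
    have hle : Submodule.span (ZMod 2) (Set.range v) ≤ LinearMap.ker (sB n P) := by
      rw [Submodule.span_le]
      rintro _ ⟨j, rfl⟩
      have hj := congrFun h j
      simp only [LinearMap.pi_apply, Pi.zero_apply] at hj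
      simp only [Set.mem_setOf_eq, SetLike.mem_coe, LinearMap.mem_ker, sB_apply]
      rw [sympOmega_comm]
      exact hj
    exact hle hQ
  · intro h
    funext j
    simp only [LinearMap.pi_apply, Pi.zero_apply, sB_apply]
    rw [sympOmega_comm]
    exact h (v j) (Submodule.subset_span ⟨j, rfl⟩)

lemma sPerp_sup {n : ℕ} (A B : Submodule (ZMod 2) (PV n)) :
    sPerp (A ⊔ B) = sPerp A ⊓ sPerp B := by
  ext P
  simp only [Submodule.mem_inf, mem_sPerp]
  constructor
  · intro h
    exact ⟨fun Q hQ => h Q (Submodule.mem_sup_left hQ),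
           fun Q hQ => h Q (Submodule.mem_sup_right hQ)⟩
  · rintro ⟨h1, h2⟩ Q hQ
    have hle : A ⊔ B ≤ LinearMap.ker (sB n P) :=
      sup_le (fun x hx => by simpa using h1 x hx) (fun x hx => by simpa using h2 x hx)
    simpa using hle hQ

lemma sup_trunc_eq {n : ℕ} (i : ℕ) (S : Submodule (ZMod 2) (PV n)) :
    S ⊔ S.map (trunc n i) = S.map (trunc n i) ⊔ S.map (LinearMap.id - trunc n i) := by
  apply le_antisymm
  · refine sup_le ?_ le_sup_left
    intro x hx
    have hdecomp : x = trunc n i x + (LinearMap.id - trunc n i : PV n →ₗ[ZMod 2] PV n) x := by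
      simp [LinearMap.sub_apply]
    rw [hdecomp]
    exact Submodule.add_mem_sup (Submodule.mem_map_of_mem hx) (Submodule.mem_map_of_mem hx)
  · refine sup_le le_sup_right ?_
    rintro _ ⟨y, hy, rfl⟩
    have hdecomp : (LinearMap.id - trunc n i : PV n →ₗ[ZMod 2] PV n) y = y + (-(trunc n i y)) := by
      simp [LinearMap.sub_apply, sub_eq_add_neg]
    rw [hdecomp]
    exact Submodule.add_mem_sup hy (Submodule.neg_mem _ (Submodule.mem_map_of_mem hy))

lemma disjoint_trunc {n : ℕ} (i : ℕ) (S : Submodule (ZMod 2) (PV n)) :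
    S.map (trunc n i) ⊓ S.map (LinearMap.id - trunc n i) = ⊥ := by
  rw [eq_bot_iff]
  rintro x ⟨hx1, hx2⟩
  obtain ⟨y, _, rfl⟩ := hx1
  obtain ⟨z, _, hz⟩ := hx2
  rw [Submodule.mem_bot]
  funext j
  show trunc n i y j = (0 : ZMod 2 × ZMod 2)
  by_cases h : (j : ℕ) < i
  · have := congrFun hz j
    simp only [LinearMap.sub_apply, LinearMap.id_apply, Pi.sub_apply, trunc_apply, if_pos h]
      at this ⊢
    rw [← this]
    simp
  · rw [trunc_apply, if_neg h]

/-- State profile in terms of truncated spans: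
|fᵢ(S^⊥)| = 2^{dim πᵢ(S) + dim (id − πᵢ)(S) − (n − k)}. -/
theorem wolff_state_space_profile (n k : ℕ) (hk : k ≤ n)
    (S : Submodule (ZMod 2) (PV n))
    (Sgen : Fin (n - k) → PV n) (hind : LinearIndependent (ZMod 2) Sgen)
    (hspan : Submodule.span (ZMod 2) (Set.range Sgen) = S)
    (i : ℕ) (hi : i ≤ n) :
    Nat.card ((fun (P : PV n) (j : Fin (n - k)) =>
          sympOmega (Sgen j) (trunc n i P)) '' (sPerp S : Set (PV n)))
      = 2 ^ (Module.finrank (ZMod 2) ↥(S.map (trunc n i))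
          + Module.finrank (ZMod 2) ↥(S.map (LinearMap.id - trunc n i))
          - (n - k)) := by
  classical
  set F : PV n →ₗ[ZMod 2] (Fin (n - k) → ZMod 2) :=
    (LinearMap.pi fun j => sB n (Sgen j)).comp (trunc n i) with hF
  have hfun : (fun (P : PV n) (j : Fin (n - k)) => sympOmega (Sgen j) (trunc n i P)) = ⇑F :=
    rfl
  rw [hfun, ← Submodule.map_coe F (sPerp S)]
  set M := (sPerp S).map F with hM
  -- cardinality of a finite-dimensional 𝔽₂-space
  have hcard : Nat.card ↥((M : Set (Fin (n - k) → ZMod 2))) =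
      2 ^ Module.finrank (ZMod 2) M := by
    haveI : Fintype M := Fintype.ofFinite M
    have : Nat.card ↥((M : Set (Fin (n - k) → ZMod 2))) = Nat.card M := rfl
    rw [this, Nat.card_eq_fintype_card, Module.card_eq_pow_finrank (K := ZMod 2), ZMod.card]
  rw [hcard]
  congr 1
  -- dimension bookkeeping
  set d1 := Module.finrank (ZMod 2) ↥(S.map (trunc n i))
  set d2 := Module.finrank (ZMod 2) ↥(S.map (LinearMap.id - trunc n i))
  set N := Module.finrank (ZMod 2) (PV n)
  -- rank-nullity for F restricted to sPerp S
  have h1 : Module.finrank (ZMod 2) M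
      + Module.finrank (ZMod 2) ↥(sPerp S ⊓ LinearMap.ker F)
      = Module.finrank (ZMod 2) ↥(sPerp S) := by
    have hrn := LinearMap.finrank_range_add_finrank_ker (F.domRestrict (sPerp S))
    rwa [LinearMap.range_domRestrict, LinearMap.ker_domRestrict,
      ← Submodule.finrank_map_subtype_eq (sPerp S) ((LinearMap.ker F).comap (sPerp S).subtype),
      Submodule.map_comap_subtype] at hrn
  -- the kernel of F is the perp of the truncated span
  have hFeq : F = LinearMap.pi fun j => sB n (trunc n i (Sgen j)) := by
    apply LinearMap.ext
    intro P
    funext j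
    simp only [hF, LinearMap.comp_apply, LinearMap.pi_apply, sB_apply]
    exact (sympOmega_trunc i (Sgen j) P).symm
  have hmap1 : S.map (trunc n i)
      = Submodule.span (ZMod 2) (Set.range fun j => trunc n i (Sgen j)) := by
    rw [← hspan, Submodule.map_span, ← Set.range_comp]
    rfl
  have hker : LinearMap.ker F = sPerp (S.map (trunc n i)) := by
    rw [hFeq, ker_pi_sPerp, hmap1]
  -- the intersection as a perp
  have h2 : sPerp S ⊓ LinearMap.ker F
      = sPerp (S.map (trunc n i) ⊔ S.map (LinearMap.id - trunc n i)) := by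
    rw [hker, ← sPerp_sup, sup_trunc_eq]
  -- finrank of perps via nondegeneracy
  have hperpS : Module.finrank (ZMod 2) ↥(sPerp S) = N - Module.finrank (ZMod 2) S := by
    rw [sPerp_eq_orthogonal]
    exact LinearMap.BilinForm.finrank_orthogonal sB_nondeg S
  set T := S.map (trunc n i) ⊔ S.map (LinearMap.id - trunc n i) with hT
  have hperpT : Module.finrank (ZMod 2) ↥(sPerp T)
      = N - Module.finrank (ZMod 2) T := by
    rw [sPerp_eq_orthogonal]
    exact LinearMap.BilinForm.finrank_orthogonal sB_nondeg T
  -- finrank of T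
  have hTrank : Module.finrank (ZMod 2) T = d1 + d2 := by
    have hsup := Submodule.finrank_sup_add_finrank_inf_eq
      (S.map (trunc n i)) (S.map (LinearMap.id - trunc n i))
    rw [disjoint_trunc, finrank_bot, add_zero] at hsup
    exact hsup
  -- auxiliary inequalities
  have hSrank : Module.finrank (ZMod 2) S = n - k := by
    rw [← hspan, finrank_span_eq_card hind, Fintype.card_fin]
  have hSleT : Module.finrank (ZMod 2) S ≤ Module.finrank (ZMod 2) T := by
    apply Submodule.finrank_mono
    rw [hT, ← sup_trunc_eq]
    exact le_sup_left
  have hTleN : Module.finrank (ZMod 2) T ≤ N := Submodule.finrank_le T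
  rw [h2] at h1
  rw [hperpS, hperpT, hSrank, hTrank] at h1
  rw [hSrank] at hSleT
  rw [hTrank] at hSleT hTleN
  omega
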